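/- Let 𝒞 be a collection of cells over a field K. Then the radical of the adjacent 2-minor ideal is the intersection of the ideals P_W(𝒞) over all admissible sets W of 𝒞: √I_adj(𝒞) = ⋂_{W ⊆ V(𝒞) admissible} P_W(𝒞) (the empty set is admissible, with P_∅(𝒞) = L_𝒞). -/

import Mathlib

/-!
The radical is the intersection of the primes containing `I_adj(𝒞)`, so it suffices that each
`P_W(𝒞)` with `W` admissible is such a prime, and that each such prime contains some `P_W(𝒞)`.

`P_W(𝒞)` is the kernel of the map `S_𝒞 → K[ℤ^V / Λ_{𝒞_W}]` that kills the variables of `W`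
and sends any other monomial `x^u` to the class of `u`. The generators `v_C` of `Λ_{𝒞_W}` are
unitriangular for the coordinatewise order on lower-left corners, so the lattice is saturated,
`ℤ^V / Λ_{𝒞_W}` is torsion-free, its group algebra is a domain, and `P_W(𝒞)` is prime. It
contains `I_adj(𝒞)` when `W` is admissible: the minor of a cell avoiding `W` is the lattice
binomial of `v_C`, and if an edge of the cell lies in `W`, each monomial of the minor contains a
variable of `W`.

Conversely, for a prime `𝔭 ⊇ I_adj(𝒞)` put `W = {v | x_v ∈ 𝔭}`. Since `x_a x_b ≡ x_c x_d` modulo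
`𝔭`, a cell meeting `W` meets it in a diagonal and an anti-diagonal corner, i.e. in an edge, so `W`
is admissible. In the fraction field of `S_𝒞 / 𝔭` the `x_v` with `v ∉ W` are units, so a lattice
binomial lies in `𝔭` iff a character of `ℤ^V` is trivial on its exponent; this holds on the
generators of `Λ_{𝒞_W}`, hence on all of it, and `P_W(𝒞) ⊆ 𝔭`.
-/

open MvPolynomial

/-- The vertex set of the cell with lower-left corner `a`. -/
def cellVerts (a : ℤ × ℤ) : Finset (ℤ × ℤ) :=
  {a, a + (1, 0), a + (0, 1), a + (1, 1)}

/-- The edges of the cell with lower-left corner `a`, recorded as ordered pairs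
of their two endpoints: `{a,c}`, `{c,b}`, `{b,d}`, `{a,d}` where `b = a+(1,1)`,
`c = a+(0,1)`, `d = a+(1,0)`. -/
def cellEdges (a : ℤ × ℤ) : Finset ((ℤ × ℤ) × (ℤ × ℤ)) :=
  {(a, a + (0, 1)), (a + (0, 1), a + (1, 1)), (a + (1, 1), a + (1, 0)), (a, a + (1, 0))}

/-- The vertex set of a collection of cells; cells are recorded by their
lower-left corners. -/
def verts (C : Finset (ℤ × ℤ)) : Finset (ℤ × ℤ) :=
  C.biUnion cellVerts

lemma mem_verts {C : Finset (ℤ × ℤ)} {a v : ℤ × ℤ} (ha : a ∈ C)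
    (hv : v ∈ cellVerts a) : v ∈ verts C :=
  Finset.mem_biUnion.mpr ⟨a, ha, hv⟩

lemma corner_mem00 (a : ℤ × ℤ) : a ∈ cellVerts a := by simp [cellVerts]
lemma corner_mem10 (a : ℤ × ℤ) : a + (1, 0) ∈ cellVerts a := by simp [cellVerts]
lemma corner_mem01 (a : ℤ × ℤ) : a + (0, 1) ∈ cellVerts a := by simp [cellVerts]
lemma corner_mem11 (a : ℤ × ℤ) : a + (1, 1) ∈ cellVerts a := by simp [cellVerts]

/-- The adjacent 2-minor ideal `I_adj(𝒞)` of a collection of cells, inside the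
polynomial ring `S_𝒞 = K[x_v : v ∈ V(𝒞)]`. -/
noncomputable def adjIdeal (K : Type*) [Field K] (C : Finset (ℤ × ℤ)) :
    Ideal (MvPolynomial {v // v ∈ verts C} K) :=
  Ideal.span {f | ∃ a, ∃ ha : a ∈ C,
    f = X ⟨a, mem_verts ha (corner_mem00 a)⟩ *
          X ⟨a + (1, 1), mem_verts ha (corner_mem11 a)⟩ -
        X ⟨a + (0, 1), mem_verts ha (corner_mem01 a)⟩ *
          X ⟨a + (1, 0), mem_verts ha (corner_mem10 a)⟩}

/-- The vector `v_C = e_a + e_b - e_c - e_d ∈ ℤ^{V(𝒞)}` attached to the cell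
with lower-left corner `a` (so `b = a+(1,1)`, `c = a+(0,1)`, `d = a+(1,0)`). -/
def cellVec (C : Finset (ℤ × ℤ)) (a : ℤ × ℤ) : {v // v ∈ verts C} → ℤ :=
  fun w => ((if w.1 = a then 1 else 0) + (if w.1 = a + (1, 1) then 1 else 0)
    - (if w.1 = a + (0, 1) then 1 else 0)) - (if w.1 = a + (1, 0) then 1 else 0)

/-- The lattice `Λ_𝒟 ⊆ ℤ^{V(𝒞)}` generated by the vectors `v_C`, `C ∈ 𝒟`,
for a subcollection `𝒟` of `𝒞`. -/
def cellLattice (C : Finset (ℤ × ℤ)) (D : Set (ℤ × ℤ)) :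
    AddSubgroup ({v // v ∈ verts C} → ℤ) :=
  AddSubgroup.closure {g | ∃ a ∈ D, g = cellVec C a}

/-- The lattice ideal `L_𝒟 ⊆ S_𝒞` of a subcollection `𝒟` of `𝒞`. -/
noncomputable def latticeIdeal (K : Type*) [Field K] (C : Finset (ℤ × ℤ))
    (D : Set (ℤ × ℤ)) : Ideal (MvPolynomial {v // v ∈ verts C} K) :=
  Ideal.span {f | ∃ e ∈ cellLattice C D,
    f = (∏ w, X w ^ (e w).toNat) - ∏ w, X w ^ (-(e w)).toNat}

/-- `W ⊆ V(𝒞)` is admissible: for each cell `C ∈ 𝒞`, either `W ∩ C = ∅` or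
`W ∩ C` contains an edge of `C`. -/
def Admissible (C : Finset (ℤ × ℤ)) (W : Set (ℤ × ℤ)) : Prop :=
  W ⊆ ↑(verts C) ∧ ∀ a ∈ C, (∀ v ∈ cellVerts a, v ∉ W) ∨
    ∃ e ∈ cellEdges a, e.1 ∈ W ∧ e.2 ∈ W

/-- The subcollection `𝒞_W` of cells of `𝒞` disjoint from `W`. -/
def subcollW (C : Finset (ℤ × ℤ)) (W : Set (ℤ × ℤ)) : Set (ℤ × ℤ) :=
  {a | a ∈ C ∧ ∀ v ∈ cellVerts a, v ∉ W}

/-- The ideal `P_W(𝒞) = (x_w : w ∈ W) + L_{𝒞_W}`. -/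
noncomputable def PW (K : Type*) [Field K] (C : Finset (ℤ × ℤ))
    (W : Set (ℤ × ℤ)) : Ideal (MvPolynomial {v // v ∈ verts C} K) :=
  Ideal.span {f | ∃ v : {v // v ∈ verts C}, v.1 ∈ W ∧ f = X v} +
    latticeIdeal K C (subcollW C W)

/-- The height of an ideal: the infimum of `Order.height 𝔭` over the prime
ideals `𝔭` containing it (equivalently, over its minimal primes); for a prime
ideal this is just its height. -/
noncomputable def idealHeight {R : Type*} [CommRing R] (I : Ideal R) : ℕ∞ :=
  ⨅ p ∈ {p : PrimeSpectrum R | I ≤ p.asIdeal}, Order.height p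

/-- A collection of cells is weakly connected if any two of its cells are
joined by a sequence of cells of the collection in which consecutive cells
share at least one vertex. -/
def WeaklyConnected (C : Finset (ℤ × ℤ)) : Prop :=
  ∀ a ∈ C, ∀ b ∈ C, Relation.ReflTransGen
    (fun p q => p ∈ C ∧ q ∈ C ∧ ((cellVerts p ∩ cellVerts q).Nonempty)) a b

/-- `𝒞` contains a square tetromino. -/
def HasSquareTetromino (C : Finset (ℤ × ℤ)) : Prop :=
  ∃ a : ℤ × ℤ, a ∈ C ∧ a + (1, 0) ∈ C ∧ a + (0, 1) ∈ C ∧ a + (1, 1) ∈ C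

/-- `𝒞` contains an X-pentomino. -/
def HasXPentomino (C : Finset (ℤ × ℤ)) : Prop :=
  ∃ a : ℤ × ℤ, a ∈ C ∧ a + (1, 0) ∈ C ∧ a - (1, 0) ∈ C ∧
    a + (0, 1) ∈ C ∧ a - (0, 1) ∈ C

/-- Row convexity of a collection of cells. -/
def RowConvex (C : Finset (ℤ × ℤ)) : Prop :=
  ∀ a ∈ C, ∀ b ∈ C, a.2 = b.2 → ∀ r : ℤ, a.1 ≤ r → r ≤ b.1 → (r, a.2) ∈ C

/-- Column convexity of a collection of cells. -/
def ColConvex (C : Finset (ℤ × ℤ)) : Prop :=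
  ∀ a ∈ C, ∀ b ∈ C, a.1 = b.1 → ∀ s : ℤ, a.2 ≤ s → s ≤ b.2 → (a.1, s) ∈ C

theorem AddMonoidAlgebra.mem_span_single_sub_single_of_mapDomain_eq_zero {R M N : Type*} [Ring R]
    {f : M → N} {x : AddMonoidAlgebra R M} (hx : mapDomain f x = 0) :
    x ∈ Submodule.span R {y | ∃ a b, f a = f b ∧ y = single a 1 - single b 1} := by
  rcases isEmpty_or_nonempty M with hM | hM
  · obtain rfl : x = 0 := by ext m; exact isEmptyElim m
    exact zero_mem _
  -- `ρ` picks a representative of each fiber of `f`, so `mapDomain ρ x = 0`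
  -- while `y - mapDomain ρ y` is visibly a combination of the `single a 1 - single b 1`.
  set ρ := Function.invFun f ∘ f
  have hρ (a : M) : f (ρ a) = f a := Function.invFun_eq ⟨a, rfl⟩
  have key (y : AddMonoidAlgebra R M) : y - mapDomain ρ y ∈
      Submodule.span R {y | ∃ a b, f a = f b ∧ y = single a 1 - single b 1} := by
    induction y using induction_linear with
    | zero => simp
    | add y z hy hz =>
      rw [mapDomain_add, add_sub_add_comm]
      exact add_mem hy hz
    | single a r =>
      have : single a r - single (ρ a) r = r • (single a 1 - single (ρ a) (1 : R)) := by
        simp [smul_sub]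
      rw [mapDomain_single, this]
      exact Submodule.smul_mem _ _ (Submodule.subset_span ⟨a, ρ a, (hρ a).symm, rfl⟩)
  have hρx : mapDomain ρ x = 0 := by
    have : mapDomain ρ x = mapDomain (Function.invFun f) (mapDomain f x) := by
      ext; simp [ρ, Finsupp.mapDomain_comp]
    rw [this, hx, mapDomain_zero]
  simpa [hρx] using key x

theorem AddSubgroup.closure_image_nsmulSaturated_of_unitriangular {ι V : Type*} [PartialOrder ι]
    {g : ι → V → ℤ} {s : Set ι} (htri : ∀ i ∈ s, ∃ v, g i v = 1 ∧ ∀ j ∈ s, g j v ≠ 0 → j ≤ i) :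
    (AddSubgroup.closure (g '' s)).NSMulSaturated := by
  classical
  intro n x hx
  refine or_iff_not_imp_left.2 fun hn => ?_
  change x ∈ AddSubgroup.closure (g '' s)
  change n • x ∈ AddSubgroup.closure (g '' s) at hx
  rw [← Submodule.span_int_eq_addSubgroupClosure, Submodule.mem_toAddSubgroup,
    Finsupp.mem_span_image_iff_linearCombination] at hx ⊢
  obtain ⟨l, hls, hl⟩ := hx
  rw [Finsupp.mem_supported] at hls
  have hl_apply (v : V) : ∑ j ∈ l.support, l j * g j v = n * x v := by
    simpa [Finsupp.linearCombination_apply, Finsupp.sum, Finset.sum_apply] using congrFun hl v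
  have hdvd (i : ι) : (n : ℤ) ∣ l i := by
    by_contra hi
    have hne : (l.support.filter fun i => ¬ (n : ℤ) ∣ l i).Nonempty :=
      ⟨i, Finset.mem_filter.2 ⟨Finsupp.mem_support_iff.2 fun h => hi (h ▸ dvd_zero _), hi⟩⟩
    -- at a minimal bad index `i`, the leading coordinate of `g i` sees only smaller indices
    obtain ⟨i, hi_bad, hmin⟩ := Finset.exists_minimal hne
    simp only [Finset.mem_filter] at hi_bad hmin
    obtain ⟨hi_supp, hi⟩ := hi_bad
    obtain ⟨v, hv, hlow⟩ := htri i (hls hi_supp)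
    have hrest : (n : ℤ) ∣ ∑ j ∈ l.support.erase i, l j * g j v := by
      refine Finset.dvd_sum fun j hj => ?_
      obtain ⟨hji, hj⟩ := Finset.mem_erase.1 hj
      by_cases hgj : g j v = 0
      · simp [hgj]
      refine dvd_mul_of_dvd_left ?_ _
      by_contra hjn
      exact hji (le_antisymm (hlow j (hls hj) hgj) (hmin ⟨hj, hjn⟩ (hlow j (hls hj) hgj)))
    have := hl_apply v
    rw [← Finset.add_sum_erase _ _ hi_supp, hv, mul_one] at this
    exact hi ((dvd_add_left hrest).1 (this ▸ dvd_mul_right _ _))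
  refine ⟨l.mapRange (· / (n : ℤ)) (Int.zero_ediv _),
    fun j hj => hls (Finsupp.support_mapRange hj), nsmul_right_injective hn ?_⟩
  simp only
  rw [← hl, ← natCast_zsmul, ← map_smul]
  congr 1
  ext j
  simp [Int.mul_ediv_cancel' (hdvd j)]

theorem QuotientAddGroup.isAddTorsionFree_of_nsmulSaturated {G : Type*} [AddCommGroup G]
    {H : AddSubgroup G} (hH : H.NSMulSaturated) : IsAddTorsionFree (G ⧸ H) := by
  refine ⟨fun n hn a b hab => ?_⟩
  induction a using QuotientAddGroup.induction_on
  induction b using QuotientAddGroup.induction_on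
  simp only [← QuotientAddGroup.mk_nsmul, QuotientAddGroup.eq] at hab ⊢
  rw [← smul_neg, ← smul_add] at hab
  exact (hH hab).resolve_left hn

theorem prod_pow_toNat_eq_of_mem_closure {V M : Type*} [Fintype V] [CommGroupWithZero M]
    (y : V → M) {G : Set (V → ℤ)}
    (hG : ∀ g ∈ G, (∀ v, y v = 0 → g v = 0) ∧ ∏ v, y v ^ (g v).toNat = ∏ v, y v ^ (-g v).toNat)
    {e : V → ℤ} (he : e ∈ AddSubgroup.closure G) :
    ∏ v, y v ^ (e v).toNat = ∏ v, y v ^ (-e v).toNat := by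
  classical
  -- replace the zeros of `y` by `1`, so that `e ↦ ∏ v, u v ^ e v` is a character of `V → ℤ`
  set u : V → M := fun v => if y v = 0 then 1 else y v
  have hu (v : V) : u v ≠ 0 := by by_cases h : y v = 0 <;> simp [u, h]
  have key (e : V → ℤ) (he : ∀ v, y v = 0 → e v = 0) :
      ∏ v, y v ^ (e v).toNat = ∏ v, y v ^ (-e v).toNat ↔ ∏ v, u v ^ e v = 1 := by
    have hyu (k : V → ℤ) (hk : ∀ v, y v = 0 → k v = 0) :
        ∏ v, y v ^ (k v).toNat = ∏ v, u v ^ (k v).toNat :=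
      Finset.prod_congr rfl fun v _ => by by_cases h : y v = 0 <;> simp [u, h, hk v]
    have hsplit (v : V) : u v ^ e v = u v ^ (e v).toNat / u v ^ (-e v).toNat := by
      rw [← zpow_natCast, ← zpow_natCast, ← zpow_sub₀ (hu v), Int.toNat_sub_toNat_neg]
    rw [hyu e he, hyu (fun v => -e v) (fun v hv => by simp [he v hv]),
      Finset.prod_congr rfl fun v _ => hsplit v, Finset.prod_div_distrib,
      div_eq_one_iff_eq (Finset.prod_ne_zero_iff.2 fun v _ => pow_ne_zero _ (hu v))]
  let H : AddSubgroup (V → ℤ) :=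
    { carrier := {e | (∀ v, y v = 0 → e v = 0) ∧ ∏ v, u v ^ e v = 1}
      add_mem' := fun {a b} ha hb => ⟨fun v hv => by simp [ha.1 v hv, hb.1 v hv], by
        simp [zpow_add₀ (hu _), Finset.prod_mul_distrib, ha.2, hb.2]⟩
      zero_mem' := ⟨fun _ _ => rfl, by simp⟩
      neg_mem' := fun {a} ha => ⟨fun v hv => by simp [ha.1 v hv], by
        simp [Finset.prod_inv_distrib, ha.2]⟩ }
  have hGH : AddSubgroup.closure G ≤ H :=
    (AddSubgroup.closure_le H).2 fun g hg => ⟨(hG g hg).1, (key g (hG g hg).1).1 (hG g hg).2⟩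
  exact (key e (hGH he).1).2 (hGH he).2

namespace MvPolynomial

section zeroVars

variable {σ R : Type*} [CommRing R]

open Classical in
noncomputable def zeroVars (W : Set σ) : MvPolynomial σ R →ₐ[R] MvPolynomial σ R :=
  aeval fun v => if v ∈ W then 0 else X v

theorem zeroVars_X_of_mem {W : Set σ} {v : σ} (hv : v ∈ W) :
    zeroVars W (X v : MvPolynomial σ R) = 0 := by
  simp [zeroVars, hv]

theorem sub_zeroVars_mem {W : Set σ} {I : Ideal (MvPolynomial σ R)} (hI : ∀ v ∈ W, X v ∈ I)
    (f : MvPolynomial σ R) : f - zeroVars W f ∈ I := by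
  rw [← Ideal.Quotient.eq, ← Ideal.Quotient.mkₐ_eq_mk R, ← AlgHom.comp_apply]
  congr 1
  refine (MvPolynomial.algHom_ext fun v => ?_).symm
  by_cases hv : v ∈ W
  · simpa [zeroVars, hv, eq_comm] using Ideal.Quotient.eq_zero_iff_mem.2 (hI v hv)
  · simp [zeroVars, hv]

end zeroVars

theorem prod_X_pow_ite_val_eq {α R : Type*} [DecidableEq α] [CommSemiring R] {s : Finset α}
    {x : α} (hx : x ∈ s) :
    ∏ w : {v // v ∈ s}, (X w : MvPolynomial _ R) ^ (if w.1 = x then 1 else 0) = X ⟨x, hx⟩ := by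
  simp_rw [show ∀ w : {v // v ∈ s}, w.1 = x ↔ w = ⟨x, hx⟩ from fun w => by rw [Subtype.ext_iff]]
  simp

section latticeBinomial

variable {σ R : Type*} [Fintype σ] [CommRing R]

theorem prod_X_pow_eq_monomial_of_fintype (k : σ →₀ ℕ) :
    ∏ v, (X v : MvPolynomial σ R) ^ k v = monomial k 1 := by
  rw [← prod_X_pow_eq_monomial]
  exact (Finset.prod_subset (Finset.subset_univ _) fun v _ hv => by simp_all).symm

noncomputable def latticeBinomial (e : σ → ℤ) : MvPolynomial σ R :=
  ∏ v, X v ^ (e v).toNat - ∏ v, X v ^ (-e v).toNat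

theorem prod_X_pow_sub_prod_X_pow (k k' : σ → ℕ) :
    ∏ v, (X v : MvPolynomial σ R) ^ k v - ∏ v, X v ^ k' v =
      (∏ v, X v ^ min (k v) (k' v)) * latticeBinomial fun v => (k v : ℤ) - k' v := by
  have hk : ∀ v, k v = min (k v) (k' v) + ((k v : ℤ) - k' v).toNat := by omega
  have hk' : ∀ v, k' v = min (k v) (k' v) + (-((k v : ℤ) - k' v)).toNat := by omega
  simp only [latticeBinomial, mul_sub, ← Finset.prod_mul_distrib, ← pow_add]
  conv_lhs => rw [Finset.prod_congr rfl fun v _ => congrArg (X v ^ ·) (hk v),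
    Finset.prod_congr rfl fun v _ => congrArg (X v ^ ·) (hk' v)]

theorem zeroVars_latticeBinomial {W : Set σ} {e : σ → ℤ} (he : ∀ v ∈ W, e v = 0) :
    zeroVars W (latticeBinomial e : MvPolynomial σ R) = latticeBinomial e := by
  have (k : σ → ℕ) (hk : ∀ v ∈ W, k v = 0) :
      zeroVars W (∏ v, (X v : MvPolynomial σ R) ^ k v) = ∏ v, X v ^ k v := by
    simp only [map_prod, map_pow, zeroVars, aeval_X]
    exact Finset.prod_congr rfl fun v _ => by by_cases hv : v ∈ W <;> simp [hv, hk]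
  rw [latticeBinomial, map_sub, this _ (by simp +contextual [he]),
    this _ (by simp +contextual [he])]

end latticeBinomial

section classMap

variable {σ R : Type*} [CommRing R]

noncomputable def exponentClass (Λ : AddSubgroup (σ → ℤ)) : (σ →₀ ℕ) →+ (σ → ℤ) ⧸ Λ :=
  (QuotientAddGroup.mk' Λ).comp
    (Finsupp.coeFnAddHom.comp (Finsupp.mapRange.addMonoidHom (Nat.castAddMonoidHom ℤ)))

theorem exponentClass_apply (Λ : AddSubgroup (σ → ℤ)) (u : σ →₀ ℕ) :
    exponentClass Λ u = ((fun v => (u v : ℤ) : σ → ℤ) : (σ → ℤ) ⧸ Λ) :=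
  rfl

variable (R) in
noncomputable def classMap (Λ : AddSubgroup (σ → ℤ)) :
    MvPolynomial σ R →ₐ[R] AddMonoidAlgebra R ((σ → ℤ) ⧸ Λ) :=
  AddMonoidAlgebra.mapDomainAlgHom R R (exponentClass Λ)

variable [Fintype σ]

theorem classMap_prod_X_pow (Λ : AddSubgroup (σ → ℤ)) (k : σ → ℕ) :
    classMap R Λ (∏ v, X v ^ k v) =
      AddMonoidAlgebra.single ((fun v => (k v : ℤ) : σ → ℤ) : (σ → ℤ) ⧸ Λ) 1 := by
  have := prod_X_pow_eq_monomial_of_fintype (R := R) (Finsupp.equivFunOnFinite.symm k)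
  simp only [Finsupp.coe_equivFunOnFinite_symm] at this
  rw [this, ← single_eq_monomial, classMap, AddMonoidAlgebra.mapDomainAlgHom_apply,
    AddMonoidAlgebra.mapDomain_single]
  rfl

theorem classMap_latticeBinomial {Λ : AddSubgroup (σ → ℤ)} {e : σ → ℤ} (he : e ∈ Λ) :
    classMap R Λ (latticeBinomial e) = 0 := by
  rw [latticeBinomial, map_sub, classMap_prod_X_pow, classMap_prod_X_pow, sub_eq_zero]
  congr 1
  rw [QuotientAddGroup.eq]
  convert neg_mem he using 1
  ext v
  simp only [Pi.add_apply, Pi.neg_apply]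
  omega

theorem ker_classMap_le {Λ : AddSubgroup (σ → ℤ)} {I : Ideal (MvPolynomial σ R)}
    (hI : ∀ e ∈ Λ, latticeBinomial e ∈ I) : RingHom.ker (classMap R Λ) ≤ I := by
  intro f hf
  refine (Submodule.span_le (p := I.restrictScalars R)).2 ?_
    (AddMonoidAlgebra.mem_span_single_sub_single_of_mapDomain_eq_zero hf)
  rintro _ ⟨u, u', huu', rfl⟩
  rw [single_eq_monomial, single_eq_monomial, ← prod_X_pow_eq_monomial_of_fintype,
    ← prod_X_pow_eq_monomial_of_fintype, prod_X_pow_sub_prod_X_pow]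
  refine I.mul_mem_left _ (hI _ ?_)
  rw [exponentClass_apply, exponentClass_apply, QuotientAddGroup.eq] at huu'
  convert neg_mem huu' using 1
  ext v
  simp only [Pi.add_apply, Pi.neg_apply]
  ring

end classMap

end MvPolynomial

section Cells

variable {C : Finset (ℤ × ℤ)}

theorem le_of_mem_cellVerts {a v : ℤ × ℤ} (hv : v ∈ cellVerts a) : a ≤ v := by
  simp only [cellVerts, Finset.mem_insert, Finset.mem_singleton] at hv
  rcases hv with rfl | rfl | rfl | rfl <;> simp [Prod.le_def]

theorem cellVec_eq_zero_of_notMem {a : ℤ × ℤ} {w : {v // v ∈ verts C}}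
    (hw : w.1 ∉ cellVerts a) : cellVec C a w = 0 := by
  simp only [cellVerts, Finset.mem_insert, Finset.mem_singleton, not_or] at hw
  simp [cellVec, hw]

theorem cellVec_toNat (a : ℤ × ℤ) (w : {v // v ∈ verts C}) :
    (cellVec C a w).toNat = (if w.1 = a then 1 else 0) + (if w.1 = a + (1, 1) then 1 else 0) := by
  unfold cellVec
  split_ifs <;> simp_all [Prod.ext_iff]

theorem neg_cellVec_toNat (a : ℤ × ℤ) (w : {v // v ∈ verts C}) :
    (-cellVec C a w).toNat =
      (if w.1 = a + (0, 1) then 1 else 0) + (if w.1 = a + (1, 0) then 1 else 0) := by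
  unfold cellVec
  split_ifs <;> simp_all [Prod.ext_iff]

theorem cellLattice_nsmulSaturated {D : Set (ℤ × ℤ)} (hD : D ⊆ C) :
    (cellLattice C D).NSMulSaturated := by
  have : cellLattice C D = AddSubgroup.closure (cellVec C '' D) := by
    simp only [cellLattice, Set.image, eq_comm]
  rw [this]
  -- `v_C` has coefficient `1` at the lower-left corner `a` of `C`,
  -- and only cells `≤ a` coordinatewise touch `a`
  refine AddSubgroup.closure_image_nsmulSaturated_of_unitriangular fun a ha =>
    ⟨⟨a, mem_verts (hD ha) (corner_mem00 a)⟩, by simp [cellVec, Prod.ext_iff], fun b _ hb => ?_⟩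
  by_contra hba
  exact hb (cellVec_eq_zero_of_notMem fun h => hba (le_of_mem_cellVerts h))

theorem apply_eq_zero_of_mem_cellLattice {W : Set (ℤ × ℤ)} {e : {v // v ∈ verts C} → ℤ}
    (he : e ∈ cellLattice C (subcollW C W)) {w : {v // v ∈ verts C}} (hw : w.1 ∈ W) :
    e w = 0 := by
  induction he using AddSubgroup.closure_induction with
  | mem g hg =>
    obtain ⟨a, ha, rfl⟩ := hg
    exact cellVec_eq_zero_of_notMem fun h => ha.2 _ h hw
  | zero => rfl
  | add _ _ _ _ h₁ h₂ => simp [h₁, h₂]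
  | neg _ _ h => simp [h]

variable (R : Type*) [CommRing R]

noncomputable def cellMinor {a : ℤ × ℤ} (ha : a ∈ C) : MvPolynomial {v // v ∈ verts C} R :=
  X ⟨a, mem_verts ha (corner_mem00 a)⟩ * X ⟨a + (1, 1), mem_verts ha (corner_mem11 a)⟩ -
    X ⟨a + (0, 1), mem_verts ha (corner_mem01 a)⟩ * X ⟨a + (1, 0), mem_verts ha (corner_mem10 a)⟩

theorem cellMinor_mem_adjIdeal (K : Type*) [Field K] {a : ℤ × ℤ} (ha : a ∈ C) :
    cellMinor K ha ∈ adjIdeal K C :=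
  Ideal.subset_span ⟨a, ha, rfl⟩

theorem latticeBinomial_cellVec {a : ℤ × ℤ} (ha : a ∈ C) :
    latticeBinomial (cellVec C a) = cellMinor R ha := by
  simp only [latticeBinomial, cellMinor, cellVec_toNat, neg_cellVec_toNat, pow_add,
    Finset.prod_mul_distrib]
  rw [prod_X_pow_ite_val_eq (mem_verts ha (corner_mem00 a)),
    prod_X_pow_ite_val_eq (mem_verts ha (corner_mem11 a)),
    prod_X_pow_ite_val_eq (mem_verts ha (corner_mem01 a)),
    prod_X_pow_ite_val_eq (mem_verts ha (corner_mem10 a))]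

end Cells

section PW

variable (K : Type*) [Field K] (C : Finset (ℤ × ℤ)) (W : Set (ℤ × ℤ))

theorem X_mem_PW {v : {v // v ∈ verts C}} (hv : v.1 ∈ W) : X v ∈ PW K C W :=
  Submodule.mem_sup_left (Ideal.subset_span ⟨v, hv, rfl⟩)

theorem latticeBinomial_mem_PW {e : {v // v ∈ verts C} → ℤ}
    (he : e ∈ cellLattice C (subcollW C W)) : latticeBinomial e ∈ PW K C W :=
  Submodule.mem_sup_right (Ideal.subset_span ⟨e, he, rfl⟩)

noncomputable def pwMap : MvPolynomial {v // v ∈ verts C} K →ₐ[K]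
    AddMonoidAlgebra K (({v // v ∈ verts C} → ℤ) ⧸ cellLattice C (subcollW C W)) :=
  (classMap K (cellLattice C (subcollW C W))).comp (zeroVars (Subtype.val ⁻¹' W))

theorem PW_eq_ker_pwMap : PW K C W = RingHom.ker (pwMap K C W) := by
  refine le_antisymm (sup_le (Ideal.span_le.2 ?_) (Ideal.span_le.2 ?_)) fun f hf => ?_
  · rintro _ ⟨v, hv, rfl⟩
    simp [pwMap, zeroVars_X_of_mem (show v ∈ Subtype.val ⁻¹' W from hv)]
  · rintro _ ⟨e, he, rfl⟩
    change classMap K _ (zeroVars _ (latticeBinomial e)) = 0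
    rw [zeroVars_latticeBinomial (W := Subtype.val ⁻¹' W) fun v hv =>
        apply_eq_zero_of_mem_cellLattice he hv,
      classMap_latticeBinomial he]
  · have hzero : zeroVars (Subtype.val ⁻¹' W) f ∈ PW K C W :=
      ker_classMap_le (fun e he => latticeBinomial_mem_PW K C W he) hf
    simpa using add_mem
      (sub_zeroVars_mem (W := Subtype.val ⁻¹' W) (fun v hv => X_mem_PW K C W hv) f) hzero

theorem PW_isPrime : (PW K C W).IsPrime := by
  have := QuotientAddGroup.isAddTorsionFree_of_nsmulSaturated
    (cellLattice_nsmulSaturated (C := C) (D := subcollW C W) fun _ ha => ha.1)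
  rw [PW_eq_ker_pwMap]
  exact RingHom.ker_isPrime _

theorem adjIdeal_le_PW (hW : Admissible C W) : adjIdeal K C ≤ PW K C W := by
  refine Ideal.span_le.2 ?_
  rintro _ ⟨a, ha, rfl⟩
  rcases hW.2 a ha with hdisj | ⟨e, he, he₁, he₂⟩
  · change cellMinor K ha ∈ _
    rw [← latticeBinomial_cellVec]
    exact latticeBinomial_mem_PW K C W (AddSubgroup.subset_closure ⟨a, ⟨ha, hdisj⟩, rfl⟩)
  · -- both monomials of the minor contain a variable of the edge `e ⊆ W`
    simp only [cellEdges, Finset.mem_insert, Finset.mem_singleton] at he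
    rcases he with rfl | rfl | rfl | rfl <;> apply sub_mem <;>
      first
        | exact Ideal.mul_mem_right _ _ (X_mem_PW K C W ‹_›)
        | exact Ideal.mul_mem_left _ _ (X_mem_PW K C W ‹_›)

end PW

section vertsIn

variable (K : Type*) [Field K] (C : Finset (ℤ × ℤ)) (p : Ideal (MvPolynomial {v // v ∈ verts C} K))

def vertsIn : Set (ℤ × ℤ) :=
  {x | ∃ h : x ∈ verts C, X ⟨x, h⟩ ∈ p}

variable {K C p} in
theorem X_mem_iff_mem_vertsIn {v : {v // v ∈ verts C}} : X v ∈ p ↔ v.1 ∈ vertsIn K C p :=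
  ⟨fun h => ⟨v.2, h⟩, fun ⟨_, h⟩ => h⟩

theorem admissible_vertsIn (hp : p.IsPrime) (hIp : adjIdeal K C ≤ p) :
    Admissible C (vertsIn K C p) := by
  refine ⟨fun x ⟨hx, _⟩ => hx, fun a ha => ?_⟩
  have hminor := hIp (cellMinor_mem_adjIdeal K ha)
  rw [cellMinor, ← Ideal.Quotient.eq_zero_iff_mem, map_sub, sub_eq_zero] at hminor
  -- the two monomials of the minor agree modulo `p`, and `p` is prime
  have hdiag := congrArg (· = 0) hminor
  simp only [eq_iff_iff, Ideal.Quotient.eq_zero_iff_mem, hp.mul_mem_iff_mem_or_mem,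
    X_mem_iff_mem_vertsIn] at hdiag
  by_cases hab : a ∈ vertsIn K C p ∨ a + (1, 1) ∈ vertsIn K C p
  · right
    have hcd := hdiag.1 hab
    rcases hab with h₁ | h₁ <;> rcases hcd with h₂ | h₂
    exacts [⟨(a, a + (0, 1)), by simp [cellEdges], h₁, h₂⟩,
      ⟨(a, a + (1, 0)), by simp [cellEdges], h₁, h₂⟩,
      ⟨(a + (0, 1), a + (1, 1)), by simp [cellEdges], h₂, h₁⟩,
      ⟨(a + (1, 1), a + (1, 0)), by simp [cellEdges], h₁, h₂⟩]
  · left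
    intro v hv
    simp only [cellVerts, Finset.mem_insert, Finset.mem_singleton] at hv
    rcases hv with rfl | rfl | rfl | rfl <;> tauto

theorem PW_vertsIn_le (hp : p.IsPrime) (hIp : adjIdeal K C ≤ p) :
    PW K C (vertsIn K C p) ≤ p := by
  refine sup_le (Ideal.span_le.2 ?_) (Ideal.span_le.2 ?_)
  · rintro _ ⟨v, hv, rfl⟩
    exact X_mem_iff_mem_vertsIn.2 hv
  rintro _ ⟨e, he, rfl⟩
  have := hp
  -- in the fraction field of `S ⧸ p` the variables outside `vertsIn K C p` become units
  let ι := (algebraMap (MvPolynomial {v // v ∈ verts C} K ⧸ p)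
    (FractionRing (MvPolynomial {v // v ∈ verts C} K ⧸ p))).comp (Ideal.Quotient.mk p)
  have hι (f : MvPolynomial {v // v ∈ verts C} K) : ι f = 0 ↔ f ∈ p := by
    simp [ι, Ideal.Quotient.eq_zero_iff_mem]
  have hbin (e : {v // v ∈ verts C} → ℤ) : ι (latticeBinomial e) = 0 ↔
      ∏ v, ι (X v) ^ (e v).toNat = ∏ v, ι (X v) ^ (-e v).toNat := by
    simp [latticeBinomial, sub_eq_zero, map_prod]
  refine (hι _).1 ((hbin e).2 (prod_pow_toNat_eq_of_mem_closure _ ?_ he))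
  rintro _ ⟨a, ha, rfl⟩
  refine ⟨fun v hv => cellVec_eq_zero_of_notMem fun hva =>
    ha.2 _ hva (X_mem_iff_mem_vertsIn.1 ((hι _).1 hv)), (hbin _).1 ((hι _).2 ?_)⟩
  rw [latticeBinomial_cellVec K ha.1]
  exact hIp (cellMinor_mem_adjIdeal K ha.1)

end vertsIn

theorem stmt_12_general (K : Type*) [Field K] (C : Finset (ℤ × ℤ)) :
    (adjIdeal K C).radical = ⨅ W ∈ {W : Set (ℤ × ℤ) | Admissible C W}, PW K C W := by
  refine le_antisymm (le_iInf₂ fun W hW => ?_) ?_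
  · exact (PW_isPrime K C W).radical_le_iff.2 (adjIdeal_le_PW K C W hW)
  · rw [Ideal.radical_eq_sInf]
    refine le_sInf fun p ⟨hIp, hp⟩ => ?_
    exact (iInf₂_le _ (admissible_vertsIn K C p hp hIp)).trans (PW_vertsIn_le K C p hp hIp)

/-- `√I_adj(𝒞) = ⋂_{W admissible} P_W(𝒞)`. -/
theorem stmt_12 (K : Type*) [Field K] (C : Finset (ℤ × ℤ)) (hC : C.Nonempty) :
    (adjIdeal K C).radical = ⨅ W ∈ {W : Set (ℤ × ℤ) | Admissible C W}, PW K C W :=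
  stmt_12_general K C
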